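/- arXiv:1503.00055 — 2 statements merged into one kernel-verified Lean document; each statement's English description precedes it below -/
import Mathlib

section
/- Let F be a Finsler metric on an open set U ⊆ ℝⁿ. Then F is projectively flat on U (i.e. satisfies Hamel's equations ∂²F/∂x^l∂y^k = ∂²F/∂x^k∂y^l) if and only if there exist functions P(x,y), positively homogeneous of degree 1 in y, and K(x,y), positively homogeneous of degree 0 in y, both C^∞ on U × (ℝⁿ∖{0}), such that for all k: ∂F/∂x^k = ∂(PF)/∂y^k and ∂P/∂x^k = P ∂P/∂y^k − (1/(3F)) ∂(K F³)/∂y^k. In this case P = (y^m ∂F/∂x^m)/(2F) is the projective factor of F. -/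
open MeasureTheory

noncomputable section

variable {n : ℕ}

/-- Partial derivative of a function of one vector variable, in direction `i`. -/
def pd (f : (Fin n → ℝ) → ℝ) (i : Fin n) (x : Fin n → ℝ) : ℝ :=
  fderiv ℝ f x (Pi.single i 1)

/-- Partial derivative of `T = T(x,y)` in the fibre variable `y^i`. -/
def dy (T : (Fin n → ℝ) → (Fin n → ℝ) → ℝ) (i : Fin n) :
    (Fin n → ℝ) → (Fin n → ℝ) → ℝ :=
  fun x y => fderiv ℝ (T x) y (Pi.single i 1)

/-- Partial derivative of `T = T(x,y)` in the base variable `x^i`. -/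
def dx (T : (Fin n → ℝ) → (Fin n → ℝ) → ℝ) (i : Fin n) :
    (Fin n → ℝ) → (Fin n → ℝ) → ℝ :=
  fun x y => fderiv ℝ (fun x' => T x' y) x (Pi.single i 1)

/-- The square `F²` of a metric. -/
def funSq (F : (Fin n → ℝ) → (Fin n → ℝ) → ℝ) : (Fin n → ℝ) → (Fin n → ℝ) → ℝ :=
  fun x y => (F x y) ^ 2

/-- The fundamental tensor `g_{ij} = ½ ∂²(F²)/∂y^i∂y^j`. -/
def gMat (F : (Fin n → ℝ) → (Fin n → ℝ) → ℝ) (x y : Fin n → ℝ) :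
    Matrix (Fin n) (Fin n) ℝ :=
  Matrix.of fun i j => (1 / 2) * dy (dy (funSq F) j) i x y

/-- `F` is a Finsler metric on the open connected set `U ⊆ ℝⁿ`. -/
structure IsFinslerMetric (U : Set (Fin n → ℝ))
    (F : (Fin n → ℝ) → (Fin n → ℝ) → ℝ) : Prop where
  isOpen : IsOpen U
  isConnected : IsConnected U
  continuousOn : ContinuousOn (fun p : (Fin n → ℝ) × (Fin n → ℝ) => F p.1 p.2)
    (U ×ˢ Set.univ)
  smoothOn : ContDiffOn ℝ (⊤ : ℕ∞) (fun p : (Fin n → ℝ) × (Fin n → ℝ) => F p.1 p.2)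
    (U ×ˢ {y : Fin n → ℝ | y ≠ 0})
  pos : ∀ x ∈ U, ∀ y : Fin n → ℝ, y ≠ 0 → 0 < F x y
  map_zero : ∀ x ∈ U, F x 0 = 0
  homog : ∀ x ∈ U, ∀ y : Fin n → ℝ, ∀ c : ℝ, 0 < c → F x (c • y) = c * F x y
  posDef : ∀ x ∈ U, ∀ y : Fin n → ℝ, y ≠ 0 → (gMat F x y).PosDef

/-- Geodesic coefficients `G^i = ¼ g^{il}( y^m ∂²(F²)/∂x^m∂y^l − ∂(F²)/∂x^l )`. -/
def geoG (F : (Fin n → ℝ) → (Fin n → ℝ) → ℝ) (i : Fin n) :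
    (Fin n → ℝ) → (Fin n → ℝ) → ℝ :=
  fun x y => (1 / 4) * ∑ l, (gMat F x y)⁻¹ i l *
    ((∑ m, y m * dx (dy (funSq F) l) m x y) - dx (funSq F) l x y)

/-- Riemann curvature `R^i_k`. -/
def RiemCurv (F : (Fin n → ℝ) → (Fin n → ℝ) → ℝ) (i k : Fin n) :
    (Fin n → ℝ) → (Fin n → ℝ) → ℝ :=
  fun x y =>
    2 * dx (geoG F i) k x y
      - (∑ l, y l * dx (dy (geoG F i) k) l x y)
      + 2 * ∑ l, geoG F l x y * dy (dy (geoG F i) k) l x y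
      - ∑ l, dy (geoG F i) l x y * dy (geoG F l) k x y

/-- `F` is of scalar flag curvature `K` on `U`:  `K` is positively homogeneous of
degree 0 in `y` and `R^i_k = K (F² δ^i_k − F F_{y^k} y^i)`. -/
def IsScalarFlagCurv (U : Set (Fin n → ℝ))
    (F K : (Fin n → ℝ) → (Fin n → ℝ) → ℝ) : Prop :=
  (∀ x ∈ U, ∀ y : Fin n → ℝ, y ≠ 0 → ∀ c : ℝ, 0 < c → K x (c • y) = K x y) ∧
  ∀ x ∈ U, ∀ y : Fin n → ℝ, y ≠ 0 → ∀ i k : Fin n,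
    RiemCurv F i k x y =
      K x y * ((F x y) ^ 2 * (if i = k then (1 : ℝ) else 0)
        - F x y * dy F k x y * y i)

/-- The scalar function `θ(x,y) = θ_i(x) y^i` associated with a 1-form. -/
def oneForm (θ : (Fin n → ℝ) → Fin n → ℝ) : (Fin n → ℝ) → (Fin n → ℝ) → ℝ :=
  fun x y => ∑ i, θ x i * y i

/-- `F` is a Randers metric on `U`: `F = √(a_{ij}y^iy^j) + b_i y^i` with `(a_{ij})`
a smooth field of symmetric positive definite matrices and `b_i` smooth. -/
def IsRandersMetric (U : Set (Fin n → ℝ))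
    (F : (Fin n → ℝ) → (Fin n → ℝ) → ℝ) : Prop :=
  ∃ a : (Fin n → ℝ) → Fin n → Fin n → ℝ, ∃ b : (Fin n → ℝ) → Fin n → ℝ,
    ContDiffOn ℝ (⊤ : ℕ∞) a U ∧ ContDiffOn ℝ (⊤ : ℕ∞) b U ∧
    (∀ x ∈ U, (∀ i j, a x i j = a x j i) ∧ (Matrix.of (a x)).PosDef) ∧
    (∀ x ∈ U, ∀ y : Fin n → ℝ,
      F x y = Real.sqrt (∑ i, ∑ j, a x i j * y i * y j) + ∑ i, b x i * y i)

/-- Busemann–Hausdorff volume density `σ_F(x) = Vol(𝔹ⁿ)/Vol{y : F(x,y) < 1}`. -/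
def sigmaBH (F : (Fin n → ℝ) → (Fin n → ℝ) → ℝ) (x : Fin n → ℝ) : ℝ :=
  (volume {y : Fin n → ℝ | ∑ i, (y i) ^ 2 < 1}).toReal /
    (volume {y : Fin n → ℝ | F x y < 1}).toReal

/-- S-curvature `S = ∂G^m/∂y^m − y^m ∂(ln σ_F)/∂x^m`. -/
def SCurv (F : (Fin n → ℝ) → (Fin n → ℝ) → ℝ) :
    (Fin n → ℝ) → (Fin n → ℝ) → ℝ :=
  fun x y => (∑ m, dy (geoG F m) m x y)
    - ∑ m, y m * pd (fun x' => Real.log (sigmaBH F x')) m x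

/-- Horizontal (Berwald) covariant derivative of a scalar:
`T_{|k} = ∂T/∂x^k − N^m_k ∂T/∂y^m` with `N^m_k = ∂G^m/∂y^k`. -/
def hD (F T : (Fin n → ℝ) → (Fin n → ℝ) → ℝ) (k : Fin n) :
    (Fin n → ℝ) → (Fin n → ℝ) → ℝ :=
  fun x y => dx T k x y - ∑ m, dy (geoG F m) k x y * dy T m x y

/-- Horizontal (Berwald) covariant derivative of a covector field:
`T_{i|j} = ∂T_i/∂x^j − N^m_j ∂T_i/∂y^m − T_m Γ^m_{ij}`. -/
def hDCov (F : (Fin n → ℝ) → (Fin n → ℝ) → ℝ)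
    (T : Fin n → (Fin n → ℝ) → (Fin n → ℝ) → ℝ) (i j : Fin n) :
    (Fin n → ℝ) → (Fin n → ℝ) → ℝ :=
  fun x y => dx (T i) j x y - (∑ m, dy (geoG F m) j x y * dy (T i) m x y)
    - ∑ m, T m x y * dy (dy (geoG F m) i) j x y

/-- Hamel's projective flatness equations on `U`. -/
def IsProjFlat (U : Set (Fin n → ℝ))
    (F : (Fin n → ℝ) → (Fin n → ℝ) → ℝ) : Prop :=
  ∀ x ∈ U, ∀ y : Fin n → ℝ, y ≠ 0 → ∀ k l : Fin n,
    dx (dy F k) l x y = dx (dy F l) k x y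

/-- Projective factor `P = (y^m ∂F/∂x^m)/(2F)` of a projectively flat metric. -/
def projFactor (F : (Fin n → ℝ) → (Fin n → ℝ) → ℝ) :
    (Fin n → ℝ) → (Fin n → ℝ) → ℝ :=
  fun x y => (∑ m, y m * dx F m x y) / (2 * F x y)

/-- Flag curvature `K = (P² − y^m ∂P/∂x^m)/F²` of a projectively flat metric. -/
def flagCurvPF (F : (Fin n → ℝ) → (Fin n → ℝ) → ℝ) :
    (Fin n → ℝ) → (Fin n → ℝ) → ℝ :=
  fun x y => ((projFactor F x y) ^ 2 - ∑ m, y m * dx (projFactor F) m x y) /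
    (F x y) ^ 2

/-!
Everything reduces to coordinate calculus on `U × (ℝⁿ ∖ 0)`: symmetry of second partial
derivatives, Euler's relation for functions homogeneous in `y`, and the Leibniz rule for the
operator `dxAlong T = y^m T_{x^m}`. Under Hamel's equations
`y^m F_{y^k x^m} = (y^m F_{y^m})_{x^k} = F_{x^k}`, so differentiating `y^m F_{x^m} = 2PF` in `y^k`
gives `F_{x^k} = (PF)_{y^k}`. Applying `y^m ∂_{x^m}` to the expanded identity
`F_{x^k} = P_{y^k} F + P F_{y^k}` and comparing with `∂_{x^k}(y^m F_{x^m}) = 2 (PF)_{x^k}`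
determines `y^m P_{y^k x^m}`, which is exactly the term needed to evaluate `(K F³)_{y^k}` for
`K = (P² − y^m P_{x^m}) / F²`. Conversely, `F_{x^k} = (PF)_{y^k}` makes
`F_{y^k x^l} = (PF)_{y^l y^k}` symmetric in `k, l`; contracting it with `y^k` and using Euler's
relation for the 2-homogeneous `PF` gives `y^k F_{x^k} = 2PF`, i.e. `P` is the projective factor.
-/

open Function Filter Topology
open scoped ContDiff

section PartialDerivatives

variable {T A B : (Fin n → ℝ) → (Fin n → ℝ) → ℝ} {x y : Fin n → ℝ} {k : Fin n}

lemma DifferentiableAt.of_uncurry_base (hT : DifferentiableAt ℝ (uncurry T) (x, y)) :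
    DifferentiableAt ℝ (fun x' => T x' y) x :=
  hT.comp (f := fun x' => (x', y)) x (differentiableAt_id.prodMk (differentiableAt_const y))

lemma DifferentiableAt.of_uncurry_fibre (hT : DifferentiableAt ℝ (uncurry T) (x, y)) :
    DifferentiableAt ℝ (T x) y :=
  hT.comp (f := fun y' => (x, y')) y ((differentiableAt_const x).prodMk differentiableAt_id)

lemma ContDiffAt.differentiableAt_base (hT : ContDiffAt ℝ ∞ (uncurry T) (x, y)) :
    DifferentiableAt ℝ (fun x' => T x' y) x :=
  (hT.differentiableAt (by simp)).of_uncurry_base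

lemma ContDiffAt.differentiableAt_fibre (hT : ContDiffAt ℝ ∞ (uncurry T) (x, y)) :
    DifferentiableAt ℝ (T x) y :=
  (hT.differentiableAt (by simp)).of_uncurry_fibre

lemma dx_eq_fderiv_uncurry (hT : DifferentiableAt ℝ (uncurry T) (x, y)) (k : Fin n) :
    dx T k x y = fderiv ℝ (uncurry T) (x, y) (Pi.single k 1, 0) := by
  have h := (hT.hasFDerivAt.comp x (hasFDerivAt_prodMk_left (𝕜 := ℝ) x y)).fderiv
  simp [dx, show (fun x' => T x' y) = uncurry T ∘ fun x' => (x', y) from rfl, h]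

lemma dy_eq_fderiv_uncurry (hT : DifferentiableAt ℝ (uncurry T) (x, y)) (k : Fin n) :
    dy T k x y = fderiv ℝ (uncurry T) (x, y) (0, Pi.single k 1) := by
  have h := (hT.hasFDerivAt.comp y (hasFDerivAt_prodMk_right (𝕜 := ℝ) x y)).fderiv
  simp [dy, show T x = uncurry T ∘ fun y' => (x, y') from rfl, h]

lemma ContDiffAt.eventually_differentiableAt {E G : Type*} [NormedAddCommGroup E]
    [NormedSpace ℝ E] [NormedAddCommGroup G] [NormedSpace ℝ G] {f : E → G} {p : E}
    (hf : ContDiffAt ℝ ∞ f p) :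
    ∀ᶠ q in 𝓝 p, DifferentiableAt ℝ f q :=
  ((hf.of_le (by simp : (1 : ℕ∞ω) ≤ ∞)).eventually (by simp)).mono
    fun _ hq => hq.differentiableAt one_ne_zero

lemma ContDiffAt.uncurry_dx_eventuallyEq (hT : ContDiffAt ℝ ∞ (uncurry T) (x, y))
    (k : Fin n) :
    uncurry (dx T k) =ᶠ[𝓝 (x, y)] fun p => fderiv ℝ (uncurry T) p (Pi.single k 1, 0) :=
  hT.eventually_differentiableAt.mono fun _ hp => dx_eq_fderiv_uncurry (T := T) hp k

lemma ContDiffAt.uncurry_dy_eventuallyEq (hT : ContDiffAt ℝ ∞ (uncurry T) (x, y))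
    (k : Fin n) :
    uncurry (dy T k) =ᶠ[𝓝 (x, y)] fun p => fderiv ℝ (uncurry T) p (0, Pi.single k 1) :=
  hT.eventually_differentiableAt.mono fun _ hp => dy_eq_fderiv_uncurry (T := T) hp k

lemma ContDiffAt.contDiffAt_fderiv_apply {E G : Type*} [NormedAddCommGroup E]
    [NormedSpace ℝ E] [NormedAddCommGroup G] [NormedSpace ℝ G] {f : E → G} {p : E}
    (hf : ContDiffAt ℝ ∞ f p) (w : E) :
    ContDiffAt ℝ ∞ (fun q => fderiv ℝ f q w) p :=
  (hf.fderiv_right (m := ∞) (by simp)).clm_apply contDiffAt_const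

lemma ContDiffAt.dx (hT : ContDiffAt ℝ ∞ (uncurry T) (x, y)) (k : Fin n) :
    ContDiffAt ℝ ∞ (uncurry (dx T k)) (x, y) :=
  (hT.contDiffAt_fderiv_apply _).congr_of_eventuallyEq (hT.uncurry_dx_eventuallyEq k)

lemma ContDiffAt.dy (hT : ContDiffAt ℝ ∞ (uncurry T) (x, y)) (k : Fin n) :
    ContDiffAt ℝ ∞ (uncurry (dy T k)) (x, y) :=
  (hT.contDiffAt_fderiv_apply _).congr_of_eventuallyEq (hT.uncurry_dy_eventuallyEq k)

lemma fderiv_uncurry_eq_hessian (hT : ContDiffAt ℝ ∞ (uncurry T) (x, y))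
    {S : (Fin n → ℝ) → (Fin n → ℝ) → ℝ} {w : (Fin n → ℝ) × (Fin n → ℝ)}
    (hS : uncurry S =ᶠ[𝓝 (x, y)] fun p => fderiv ℝ (uncurry T) p w)
    (v : (Fin n → ℝ) × (Fin n → ℝ)) :
    fderiv ℝ (uncurry S) (x, y) v = fderiv ℝ (fderiv ℝ (uncurry T)) (x, y) v w := by
  have hd : DifferentiableAt ℝ (fderiv ℝ (uncurry T)) (x, y) :=
    (hT.fderiv_right (m := ∞) (by simp)).differentiableAt (by simp)
  rw [hS.fderiv_eq, fderiv_clm_apply hd (differentiableAt_const w)]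
  simp

lemma dx_dy_comm (hT : ContDiffAt ℝ ∞ (uncurry T) (x, y)) (k l : Fin n) :
    dx (dy T k) l x y = dy (dx T l) k x y := by
  rw [dx_eq_fderiv_uncurry ((hT.dy k).differentiableAt (by simp)),
    dy_eq_fderiv_uncurry ((hT.dx l).differentiableAt (by simp)),
    fderiv_uncurry_eq_hessian hT (hT.uncurry_dy_eventuallyEq k),
    fderiv_uncurry_eq_hessian hT (hT.uncurry_dx_eventuallyEq l),
    hT.isSymmSndFDerivAt (by simp; exact WithTop.coe_le_coe.2 le_top)]

lemma dx_dx_comm (hT : ContDiffAt ℝ ∞ (uncurry T) (x, y)) (k l : Fin n) :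
    dx (dx T k) l x y = dx (dx T l) k x y := by
  rw [dx_eq_fderiv_uncurry ((hT.dx k).differentiableAt (by simp)),
    dx_eq_fderiv_uncurry ((hT.dx l).differentiableAt (by simp)),
    fderiv_uncurry_eq_hessian hT (hT.uncurry_dx_eventuallyEq k),
    fderiv_uncurry_eq_hessian hT (hT.uncurry_dx_eventuallyEq l),
    hT.isSymmSndFDerivAt (by simp; exact WithTop.coe_le_coe.2 le_top)]

lemma dy_dy_comm (hT : ContDiffAt ℝ ∞ (uncurry T) (x, y)) (k l : Fin n) :
    dy (dy T k) l x y = dy (dy T l) k x y := by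
  rw [dy_eq_fderiv_uncurry ((hT.dy k).differentiableAt (by simp)),
    dy_eq_fderiv_uncurry ((hT.dy l).differentiableAt (by simp)),
    fderiv_uncurry_eq_hessian hT (hT.uncurry_dy_eventuallyEq k),
    fderiv_uncurry_eq_hessian hT (hT.uncurry_dy_eventuallyEq l),
    hT.isSymmSndFDerivAt (by simp; exact WithTop.coe_le_coe.2 le_top)]

lemma dx_congr (h : (fun x' => A x' y) =ᶠ[𝓝 x] fun x' => B x' y) (k : Fin n) :
    dx A k x y = dx B k x y := by
  simp only [dx, h.fderiv_eq]

lemma dy_congr (h : A x =ᶠ[𝓝 y] B x) (k : Fin n) : dy A k x y = dy B k x y := by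
  simp only [dy, h.fderiv_eq]

lemma dx_add (hA : DifferentiableAt ℝ (fun x' => A x' y) x)
    (hB : DifferentiableAt ℝ (fun x' => B x' y) x) :
    dx (fun x' y' => A x' y' + B x' y') k x y = dx A k x y + dx B k x y := by
  simp [dx, fderiv_fun_add hA hB]

lemma dx_mul (hA : DifferentiableAt ℝ (fun x' => A x' y) x)
    (hB : DifferentiableAt ℝ (fun x' => B x' y) x) :
    dx (fun x' y' => A x' y' * B x' y') k x y = dx A k x y * B x y + A x y * dx B k x y := by
  simp [dx, fderiv_fun_mul hA hB, mul_comm, add_comm]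

lemma dx_sum {ι : Type*} [Fintype ι] {f : ι → (Fin n → ℝ) → (Fin n → ℝ) → ℝ}
    (hf : ∀ i, DifferentiableAt ℝ (fun x' => f i x' y) x) :
    dx (fun x' y' => ∑ i, f i x' y') k x y = ∑ i, dx (f i) k x y := by
  simp [dx, fderiv_fun_sum fun i _ => hf i]

lemma dy_sub (hA : DifferentiableAt ℝ (A x) y) (hB : DifferentiableAt ℝ (B x) y) :
    dy (fun x' y' => A x' y' - B x' y') k x y = dy A k x y - dy B k x y := by
  simp [dy, fderiv_fun_sub hA hB]

lemma dy_mul (hA : DifferentiableAt ℝ (A x) y) (hB : DifferentiableAt ℝ (B x) y) :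
    dy (fun x' y' => A x' y' * B x' y') k x y = dy A k x y * B x y + A x y * dy B k x y := by
  simp [dy, fderiv_fun_mul hA hB, mul_comm, add_comm]

lemma dy_const_mul (c : ℝ) : dy (fun x' y' => c * A x' y') k x y = c * dy A k x y := by
  simp [dy, show (fun y' => c * A x y') = c • A x from rfl, fderiv_const_smul_field]

lemma dy_sum {ι : Type*} [Fintype ι] {f : ι → (Fin n → ℝ) → (Fin n → ℝ) → ℝ}
    (hf : ∀ i, DifferentiableAt ℝ (f i x) y) :
    dy (fun x' y' => ∑ i, f i x' y') k x y = ∑ i, dy (f i) k x y := by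
  simp [dy, fderiv_fun_sum fun i _ => hf i]

lemma dy_coord (m : Fin n) : dy (fun _ y' => y' m) k x y = if k = m then 1 else 0 := by
  simp [dy, fderiv_apply, Pi.single_apply, eq_comm]

end PartialDerivatives

lemma ContinuousLinearMap.apply_eq_sum_mul_single {ι : Type*} [Fintype ι] [DecidableEq ι]
    (L : (ι → ℝ) →L[ℝ] ℝ) (y : ι → ℝ) : L y = ∑ i, y i * L (Pi.single i 1) := by
  conv_lhs => rw [← Finset.univ_sum_single y]
  rw [map_sum]
  refine Finset.sum_congr rfl fun i _ => ?_
  rw [show Pi.single i (y i) = y i • Pi.single i (1 : ℝ) by simp [← Pi.single_smul], map_smul,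
    smul_eq_mul]

lemma sum_mul_fderiv_single_of_homog {ι : Type*} [Fintype ι] [DecidableEq ι] {f : (ι → ℝ) → ℝ}
    {y : ι → ℝ} (r : ℕ) (hf : DifferentiableAt ℝ f y)
    (hom : ∀ c : ℝ, 0 < c → f (c • y) = c ^ r * f y) :
    ∑ l, y l * fderiv ℝ f y (Pi.single l 1) = r * f y := by
  rw [← ContinuousLinearMap.apply_eq_sum_mul_single]
  have hray : HasDerivAt (fun c : ℝ => f (c • y)) (fderiv ℝ f y y) 1 := by
    have hline : HasDerivAt (fun c : ℝ => c • y) y 1 := by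
      simpa using (hasDerivAt_id (1 : ℝ)).smul_const y
    have hf' : HasFDerivAt f (fderiv ℝ f y) ((1 : ℝ) • y) := by simpa using hf.hasFDerivAt
    exact hf'.comp_hasDerivAt 1 hline
  have hpow : HasDerivAt (fun c : ℝ => c ^ r * f y) (r * f y) 1 := by
    simpa using (hasDerivAt_pow r (1 : ℝ)).mul_const (f y)
  have heq : (fun c : ℝ => f (c • y)) =ᶠ[𝓝 1] fun c => c ^ r * f y :=
    eventually_gt_nhds one_pos |>.mono fun c hc => hom c hc
  exact hray.unique (hpow.congr_of_eventuallyEq heq)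

lemma sum_mul_dy_of_homog {T : (Fin n → ℝ) → (Fin n → ℝ) → ℝ} {x y : Fin n → ℝ} (r : ℕ)
    (hT : DifferentiableAt ℝ (T x) y) (hom : ∀ c : ℝ, 0 < c → T x (c • y) = c ^ r * T x y) :
    ∑ l, y l * dy T l x y = r * T x y :=
  sum_mul_fderiv_single_of_homog r hT hom

def dxAlong (T : (Fin n → ℝ) → (Fin n → ℝ) → ℝ) : (Fin n → ℝ) → (Fin n → ℝ) → ℝ :=
  fun x y => ∑ m, y m * dx T m x y

section DxAlong

variable {T A B : (Fin n → ℝ) → (Fin n → ℝ) → ℝ} {x y : Fin n → ℝ}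

lemma ContDiffAt.dxAlong (hT : ContDiffAt ℝ ∞ (uncurry T) (x, y)) :
    ContDiffAt ℝ ∞ (uncurry (dxAlong T)) (x, y) :=
  show ContDiffAt ℝ ∞ (fun p => ∑ m, p.2 m * _root_.dx T m p.1 p.2) (x, y) from
    ContDiffAt.sum fun m _ => ((contDiff_apply ℝ ℝ m).comp contDiff_snd).contDiffAt.mul (hT.dx m)

lemma dx_fibre_mul (g : (Fin n → ℝ) → ℝ) (k : Fin n) :
    dx (fun x' y' => g y' * A x' y') k x y = g y * dx A k x y := by
  simp [dx, show (fun x' => g y * A x' y) = g y • fun x' => A x' y from rfl,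
    fderiv_const_smul_field]

lemma dx_dxAlong (hT : ContDiffAt ℝ ∞ (uncurry T) (x, y)) (k : Fin n) :
    dx (dxAlong T) k x y = dxAlong (dx T k) x y := by
  conv_lhs => unfold dxAlong
  rw [dx_sum fun m => (differentiableAt_const _).mul (hT.dx m).differentiableAt_base]
  exact Finset.sum_congr rfl fun m _ => by rw [dx_fibre_mul (· m), dx_dx_comm hT]

lemma dy_dxAlong (hT : ContDiffAt ℝ ∞ (uncurry T) (x, y)) (k : Fin n) :
    dy (dxAlong T) k x y = dx T k x y + dxAlong (dy T k) x y := by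
  have hterm : ∀ m, dy (fun x' y' => y' m * dx T m x' y') k x y
      = (if k = m then 1 else 0) * dx T m x y + y m * dx (dy T k) m x y := fun m => by
    rw [dy_mul (A := fun _ y' => y' m) (differentiableAt_apply m y)
      (hT.dx m).differentiableAt_fibre, dy_coord, dx_dy_comm hT]
  conv_lhs => unfold dxAlong
  rw [dy_sum fun m => (differentiableAt_apply m y).mul (hT.dx m).differentiableAt_fibre,
    Finset.sum_congr rfl fun m _ => hterm m, Finset.sum_add_distrib]
  simp [dxAlong]

lemma dxAlong_congr (h : ∀ᶠ x' in 𝓝 x, A x' y = B x' y) : dxAlong A x y = dxAlong B x y := by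
  simp only [dxAlong, dx_congr h]

lemma dxAlong_add (hA : DifferentiableAt ℝ (fun x' => A x' y) x)
    (hB : DifferentiableAt ℝ (fun x' => B x' y) x) :
    dxAlong (fun x' y' => A x' y' + B x' y') x y = dxAlong A x y + dxAlong B x y := by
  simp only [dxAlong, dx_add hA hB, mul_add, Finset.sum_add_distrib]

lemma dxAlong_mul (hA : DifferentiableAt ℝ (fun x' => A x' y) x)
    (hB : DifferentiableAt ℝ (fun x' => B x' y) x) :
    dxAlong (fun x' y' => A x' y' * B x' y') x y
      = dxAlong A x y * B x y + A x y * dxAlong B x y := by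
  simp only [dxAlong, dx_mul hA hB, mul_add, Finset.sum_add_distrib, Finset.sum_mul,
    Finset.mul_sum]
  congr 1 <;> exact Finset.sum_congr rfl fun _ _ => by ring

lemma dxAlong_smul {c a : ℝ} (h : ∀ᶠ x' in 𝓝 x, T x' (c • y) = a * T x' y) :
    dxAlong T x (c • y) = c * a * dxAlong T x y := by
  have hdx : ∀ m, dx T m x (c • y) = a * dx T m x y := fun m => by
    simp [dx, Filter.EventuallyEq.fderiv_eq h,
      show (fun x' => a * T x' y) = a • fun x' => T x' y from rfl, fderiv_const_smul_field]
  simp only [dxAlong, hdx, Pi.smul_apply, smul_eq_mul, Finset.mul_sum]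
  exact Finset.sum_congr rfl fun _ _ => by ring

end DxAlong

lemma ContDiffOn.contDiffAt_uncurry {U : Set (Fin n → ℝ)} {T : (Fin n → ℝ) → (Fin n → ℝ) → ℝ}
    {x y : Fin n → ℝ} (hT : ContDiffOn ℝ ∞ (fun p => T p.1 p.2) (U ×ˢ {y | y ≠ 0}))
    (hU : IsOpen U) (hx : x ∈ U) (hy : y ≠ 0) : ContDiffAt ℝ ∞ (uncurry T) (x, y) :=
  hT.contDiffAt ((hU.prod isOpen_ne).mem_nhds ⟨hx, hy⟩)

namespace IsFinslerMetric

variable {U : Set (Fin n → ℝ)} {F P : (Fin n → ℝ) → (Fin n → ℝ) → ℝ} {x y : Fin n → ℝ}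

lemma contDiffAt (hF : IsFinslerMetric U F) (hx : x ∈ U) (hy : y ≠ 0) :
    ContDiffAt ℝ ∞ (uncurry F) (x, y) :=
  hF.smoothOn.contDiffAt_uncurry hF.isOpen hx hy

lemma sum_mul_dy (hF : IsFinslerMetric U F) (hx : x ∈ U) (hy : y ≠ 0) :
    ∑ l, y l * dy F l x y = F x y := by
  simpa using sum_mul_dy_of_homog 1 (hF.contDiffAt hx hy).differentiableAt_fibre
    fun c hc => by rw [pow_one, hF.homog x hx y c hc]

lemma dxAlong_eq_two_mul_projFactor (hF : IsFinslerMetric U F) (hx : x ∈ U) (hy : y ≠ 0) :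
    dxAlong F x y = 2 * projFactor F x y * F x y := by
  have := (hF.pos x hx y hy).ne'
  simp only [projFactor, dxAlong]
  field_simp

lemma contDiffAt_projFactor (hF : IsFinslerMetric U F) (hx : x ∈ U) (hy : y ≠ 0) :
    ContDiffAt ℝ ∞ (uncurry (projFactor F)) (x, y) :=
  (hF.contDiffAt hx hy).dxAlong.div (contDiffAt_const.mul (hF.contDiffAt hx hy))
    (by simpa using (hF.pos x hx y hy).ne')

lemma contDiffAt_flagCurvPF (hF : IsFinslerMetric U F) (hx : x ∈ U) (hy : y ≠ 0) :
    ContDiffAt ℝ ∞ (uncurry (flagCurvPF F)) (x, y) :=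
  (((hF.contDiffAt_projFactor hx hy).pow 2).sub (hF.contDiffAt_projFactor hx hy).dxAlong).div
    ((hF.contDiffAt hx hy).pow 2) (by simpa using (hF.pos x hx y hy).ne')

lemma projFactor_smul (hF : IsFinslerMetric U F) (hx : x ∈ U) {c : ℝ} (hc : 0 < c) :
    projFactor F x (c • y) = c * projFactor F x y := by
  have hD : dxAlong F x (c • y) = c * c * dxAlong F x y :=
    dxAlong_smul <| eventually_of_mem (hF.isOpen.mem_nhds hx) fun x' hx' =>
      hF.homog x' hx' y c hc
  rw [projFactor, ← dxAlong, hD, hF.homog x hx y c hc, projFactor, ← dxAlong, mul_assoc,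
    mul_div_assoc, mul_left_comm 2 c, mul_div_mul_left _ _ hc.ne']

lemma flagCurvPF_smul (hF : IsFinslerMetric U F) (hx : x ∈ U) {c : ℝ} (hc : 0 < c) :
    flagCurvPF F x (c • y) = flagCurvPF F x y := by
  have hD : dxAlong (projFactor F) x (c • y) = c * c * dxAlong (projFactor F) x y :=
    dxAlong_smul <| eventually_of_mem (hF.isOpen.mem_nhds hx) fun _ hx' =>
      hF.projFactor_smul hx' hc
  rw [flagCurvPF, ← dxAlong, hD, hF.projFactor_smul hx hc, hF.homog x hx y c hc, flagCurvPF,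
    ← dxAlong, show ∀ a b : ℝ, (c * a) ^ 2 - c * c * b = c ^ 2 * (a ^ 2 - b) by
      intros; ring, mul_pow, mul_div_mul_left _ _ (by positivity)]

lemma isProjFlat_of_dx_eq_dy_mul (hF : IsFinslerMetric U F)
    (hP : ContDiffOn ℝ ∞ (fun p => P p.1 p.2) (U ×ˢ {y | y ≠ 0}))
    (hE : ∀ x ∈ U, ∀ y : Fin n → ℝ, y ≠ 0 → ∀ k : Fin n,
      dx F k x y = dy (fun x' y' => P x' y' * F x' y') k x y) :
    IsProjFlat U F := by
  intro x hx y hy k l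
  have hPF : ContDiffAt ℝ ∞ (uncurry fun x y => P x y * F x y) (x, y) :=
    (hP.contDiffAt_uncurry hF.isOpen hx hy).mul (hF.contDiffAt hx hy)
  have hE' : ∀ k, dx F k x =ᶠ[𝓝 y] dy (fun x' y' => P x' y' * F x' y') k x :=
    fun k => (eventually_ne_nhds hy).mono fun y' hy' => hE x hx y' hy' k
  rw [dx_dy_comm (hF.contDiffAt hx hy), dx_dy_comm (hF.contDiffAt hx hy), dy_congr (hE' l),
    dy_congr (hE' k), dy_dy_comm hPF]

lemma eq_projFactor_of_dx_eq_dy_mul (hF : IsFinslerMetric U F) (hx : x ∈ U) (hy : y ≠ 0)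
    (hP : DifferentiableAt ℝ (P x) y) (hPhom : ∀ c : ℝ, 0 < c → P x (c • y) = c * P x y)
    (hE : ∀ k : Fin n, dx F k x y = dy (fun x' y' => P x' y' * F x' y') k x y) :
    P x y = projFactor F x y := by
  have hEuler := sum_mul_dy_of_homog (T := fun x y => P x y * F x y) 2
    (hP.mul (hF.contDiffAt hx hy).differentiableAt_fibre) fun c hc => by
      simp only [hPhom c hc, hF.homog x hx y c hc]; ring
  have hD : dxAlong F x y = 2 * (P x y * F x y) := by
    simpa only [dxAlong, hE, Nat.cast_ofNat] using hEuler
  rw [hF.dxAlong_eq_two_mul_projFactor hx hy] at hD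
  exact (mul_right_cancel₀ (hF.pos x hx y hy).ne' (by linarith)).symm

end IsFinslerMetric

namespace IsProjFlat

variable {U : Set (Fin n → ℝ)} {F : (Fin n → ℝ) → (Fin n → ℝ) → ℝ} {x y : Fin n → ℝ}

lemma dxAlong_dy_eq_dx (hpf : IsProjFlat U F) (hF : IsFinslerMetric U F) (hx : x ∈ U)
    (hy : y ≠ 0) (k : Fin n) :
    dxAlong (dy F k) x y = dx F k x y :=
  calc dxAlong (dy F k) x y = ∑ m, y m * dx (dy F m) k x y :=
        Finset.sum_congr rfl fun m _ => by rw [hpf x hx y hy k m]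
    _ = dx (fun x' y' => ∑ m, y' m * dy F m x' y') k x y := by
        rw [dx_sum fun m => (differentiableAt_const _).mul
          ((hF.contDiffAt hx hy).dy m).differentiableAt_base]
        simp only [dx_fibre_mul (· _)]
    _ = dx F k x y :=
        dx_congr (eventually_of_mem (hF.isOpen.mem_nhds hx) fun _ hx' => hF.sum_mul_dy hx' hy) k

lemma dy_dxAlong_eq_two_mul (hpf : IsProjFlat U F) (hF : IsFinslerMetric U F) (hx : x ∈ U)
    (hy : y ≠ 0) (k : Fin n) :
    dy (dxAlong F) k x y = 2 * dx F k x y := by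
  rw [dy_dxAlong (hF.contDiffAt hx hy), hpf.dxAlong_dy_eq_dx hF hx hy]
  ring

lemma dx_eq_dy_projFactor_mul (hpf : IsProjFlat U F) (hF : IsFinslerMetric U F) (hx : x ∈ U)
    (hy : y ≠ 0) (k : Fin n) :
    dx F k x y = dy (fun x' y' => projFactor F x' y' * F x' y') k x y := by
  have hPF : (fun y' => projFactor F x y' * F x y') =ᶠ[𝓝 y] fun y' => 1 / 2 * dxAlong F x y' :=
    (eventually_ne_nhds hy).mono fun y' hy' => by
      simp only [hF.dxAlong_eq_two_mul_projFactor hx hy']; ring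
  rw [dy_congr (B := fun x' y' => 1 / 2 * dxAlong F x' y') hPF, dy_const_mul,
    hpf.dy_dxAlong_eq_two_mul hF hx hy]
  ring

lemma dx_eq_dy_projFactor_mul_add (hpf : IsProjFlat U F) (hF : IsFinslerMetric U F) (hx : x ∈ U)
    (hy : y ≠ 0) (k : Fin n) :
    dx F k x y = dy (projFactor F) k x y * F x y + projFactor F x y * dy F k x y := by
  rw [hpf.dx_eq_dy_projFactor_mul hF hx hy,
    dy_mul (hF.contDiffAt_projFactor hx hy).differentiableAt_fibre
      (hF.contDiffAt hx hy).differentiableAt_fibre]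

lemma mul_dxAlong_dy_projFactor (hpf : IsProjFlat U F) (hF : IsFinslerMetric U F) (hx : x ∈ U)
    (hy : y ≠ 0) (k : Fin n) :
    F x y * dxAlong (dy (projFactor F) k) x y
      = 2 * F x y * dx (projFactor F) k x y - projFactor F x y * F x y * dy (projFactor F) k x y
        + (projFactor F x y ^ 2 - dxAlong (projFactor F) x y) * dy F k x y := by
  set P := projFactor F
  have hFs := hF.contDiffAt hx hy
  have hPs := hF.contDiffAt_projFactor hx hy
  have hU := hF.isOpen.mem_nhds hx
  have hcomm : dxAlong (dx F k) x y = 2 * (dx P k x y * F x y + P x y * dx F k x y) := by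
    rw [← dx_dxAlong hFs, dx_congr (B := fun x' y' => 2 * (P x' y' * F x' y'))
      (eventually_of_mem hU fun _ hx' => by
        simp only [hF.dxAlong_eq_two_mul_projFactor hx' hy]; ring),
      dx_fibre_mul (fun _ => 2), dx_mul hPs.differentiableAt_base hFs.differentiableAt_base]
  have hleibniz : dxAlong (dx F k) x y
      = dxAlong (dy P k) x y * F x y + dy P k x y * dxAlong F x y
        + (dxAlong P x y * dy F k x y + P x y * dxAlong (dy F k) x y) := by
    rw [dxAlong_congr (B := fun x' y' => dy P k x' y' * F x' y' + P x' y' * dy F k x' y')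
      (eventually_of_mem hU fun x' hx' => hpf.dx_eq_dy_projFactor_mul_add hF hx' hy k),
      dxAlong_add ((hPs.dy k).differentiableAt_base.mul hFs.differentiableAt_base)
        (hPs.differentiableAt_base.mul (hFs.dy k).differentiableAt_base),
      dxAlong_mul (hPs.dy k).differentiableAt_base hFs.differentiableAt_base,
      dxAlong_mul hPs.differentiableAt_base (hFs.dy k).differentiableAt_base]
  rw [hF.dxAlong_eq_two_mul_projFactor hx hy, hpf.dxAlong_dy_eq_dx hF hx hy] at hleibniz
  linear_combination hcomm - hleibniz + P x y * hpf.dx_eq_dy_projFactor_mul_add hF hx hy k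

lemma dx_projFactor_eq (hpf : IsProjFlat U F) (hF : IsFinslerMetric U F) (hx : x ∈ U)
    (hy : y ≠ 0) (k : Fin n) :
    dx (projFactor F) k x y = projFactor F x y * dy (projFactor F) k x y
      - 1 / (3 * F x y) * dy (fun x' y' => flagCurvPF F x' y' * F x' y' ^ 3) k x y := by
  have hX := hpf.mul_dxAlong_dy_projFactor hF hx hy k
  set P := projFactor F
  have hFs := hF.contDiffAt hx hy
  have hPs := hF.contDiffAt_projFactor hx hy
  have hKF : dy (fun x' y' => flagCurvPF F x' y' * F x' y' ^ 3) k x y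
      = dy (fun x' y' => (P x' y' * P x' y' - dxAlong P x' y') * F x' y') k x y := by
    refine dy_congr ((eventually_ne_nhds hy).mono fun y' hy' => ?_) k
    have := (hF.pos x hx y' hy').ne'
    simp only [flagCurvPF, dxAlong, P]
    field_simp
  have hdy : dy (fun x' y' => (P x' y' * P x' y' - dxAlong P x' y') * F x' y') k x y
      = (dy P k x y * P x y + P x y * dy P k x y - dy (dxAlong P) k x y) * F x y
        + (P x y * P x y - dxAlong P x y) * dy F k x y := by
    rw [dy_mul ((hPs.differentiableAt_fibre.mul hPs.differentiableAt_fibre).sub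
        hPs.dxAlong.differentiableAt_fibre) hFs.differentiableAt_fibre,
      dy_sub (hPs.differentiableAt_fibre.mul hPs.differentiableAt_fibre)
        hPs.dxAlong.differentiableAt_fibre,
      dy_mul hPs.differentiableAt_fibre hPs.differentiableAt_fibre]
  have := (hF.pos x hx y hy).ne'
  rw [hKF, hdy, dy_dxAlong hPs]
  field_simp
  linear_combination -hX

end IsProjFlat

/-- Berwald's characterization. `F` is projectively flat iff there
exist `P` (degree 1 homogeneous) and `K` (degree 0 homogeneous), smooth on
`U × (ℝⁿ∖{0})`, with `F_{x^k} = (PF)_{y^k}` and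
`P_{x^k} = P P_{y^k} − (1/(3F)) (K F³)_{y^k}`; in this case `P` is the projective
factor of `F`. -/
theorem projflat_iff_berwald_system
    {n : ℕ} {U : Set (Fin n → ℝ)}
    {F : (Fin n → ℝ) → (Fin n → ℝ) → ℝ} (hF : IsFinslerMetric U F) :
    (IsProjFlat U F ↔
      ∃ P K : (Fin n → ℝ) → (Fin n → ℝ) → ℝ,
        ContDiffOn ℝ (⊤ : ℕ∞) (fun p : (Fin n → ℝ) × (Fin n → ℝ) => P p.1 p.2)
          (U ×ˢ {y : Fin n → ℝ | y ≠ 0}) ∧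
        ContDiffOn ℝ (⊤ : ℕ∞) (fun p : (Fin n → ℝ) × (Fin n → ℝ) => K p.1 p.2)
          (U ×ˢ {y : Fin n → ℝ | y ≠ 0}) ∧
        (∀ x ∈ U, ∀ y : Fin n → ℝ, y ≠ 0 → ∀ c : ℝ, 0 < c →
          P x (c • y) = c * P x y) ∧
        (∀ x ∈ U, ∀ y : Fin n → ℝ, y ≠ 0 → ∀ c : ℝ, 0 < c →
          K x (c • y) = K x y) ∧
        (∀ x ∈ U, ∀ y : Fin n → ℝ, y ≠ 0 → ∀ k : Fin n,
          dx F k x y = dy (fun x' y' => P x' y' * F x' y') k x y) ∧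
        (∀ x ∈ U, ∀ y : Fin n → ℝ, y ≠ 0 → ∀ k : Fin n,
          dx P k x y = P x y * dy P k x y
            - 1 / (3 * F x y) * dy (fun x' y' => K x' y' * (F x' y') ^ 3) k x y)) ∧
    (∀ P K : (Fin n → ℝ) → (Fin n → ℝ) → ℝ,
        ContDiffOn ℝ (⊤ : ℕ∞) (fun p : (Fin n → ℝ) × (Fin n → ℝ) => P p.1 p.2)
          (U ×ˢ {y : Fin n → ℝ | y ≠ 0}) →
        ContDiffOn ℝ (⊤ : ℕ∞) (fun p : (Fin n → ℝ) × (Fin n → ℝ) => K p.1 p.2)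
          (U ×ˢ {y : Fin n → ℝ | y ≠ 0}) →
        (∀ x ∈ U, ∀ y : Fin n → ℝ, y ≠ 0 → ∀ c : ℝ, 0 < c →
          P x (c • y) = c * P x y) →
        (∀ x ∈ U, ∀ y : Fin n → ℝ, y ≠ 0 → ∀ c : ℝ, 0 < c →
          K x (c • y) = K x y) →
        (∀ x ∈ U, ∀ y : Fin n → ℝ, y ≠ 0 → ∀ k : Fin n,
          dx F k x y = dy (fun x' y' => P x' y' * F x' y') k x y) →
        (∀ x ∈ U, ∀ y : Fin n → ℝ, y ≠ 0 → ∀ k : Fin n,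
          dx P k x y = P x y * dy P k x y
            - 1 / (3 * F x y) * dy (fun x' y' => K x' y' * (F x' y') ^ 3) k x y) →
        ∀ x ∈ U, ∀ y : Fin n → ℝ, y ≠ 0 → P x y = projFactor F x y) := by
  refine ⟨⟨fun hpf => ?_, fun ⟨_, _, hP, _, _, _, hE, _⟩ =>
    hF.isProjFlat_of_dx_eq_dy_mul hP hE⟩, fun P _ hP _ hPhom _ hE _ x hx y hy => ?_⟩
  · exact ⟨projFactor F, flagCurvPF F,
      fun p hp => (hF.contDiffAt_projFactor hp.1 hp.2).contDiffWithinAt,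
      fun p hp => (hF.contDiffAt_flagCurvPF hp.1 hp.2).contDiffWithinAt,
      fun x hx _ _ _ hc => hF.projFactor_smul hx hc,
      fun x hx _ _ _ hc => hF.flagCurvPF_smul hx hc,
      fun x hx y hy k => hpf.dx_eq_dy_projFactor_mul hF hx hy k,
      fun x hx y hy k => hpf.dx_projFactor_eq hF hx hy k⟩
  · exact hF.eq_projFactor_of_dx_eq_dy_mul hx hy
      (hP.contDiffAt_uncurry hF.isOpen hx hy).differentiableAt_fibre (hPhom x hx y hy)
      (hE x hx y hy)
end
end

section
/- Let F be a projectively flat Finsler metric on an open set U ⊆ ℝⁿ, with projective factor P := (y^m ∂F/∂x^m)/(2F) and flag curvature K := (P² − y^m ∂P/∂x^m)/F². Then for all k, l: (F/3)(K_{·l}P_{·k} − K_{·k}P_{·l}) + P(K_{·l}F_{·k} − K_{·k}F_{·l}) + K_{x^k}F_{·l} − K_{x^l}F_{·k} + (F/3)(K_{·l x^k} − K_{·k x^l}) = 0, where subscripts ·k and x^k denote ∂/∂y^k and ∂/∂x^k respectively. -/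
open MeasureTheory

noncomputable section

variable {n : ℕ}

/-! Work on `V × V ∋ (x, y)`, where derivatives in the directions `(v, 0)` and `(0, v)` are
the `x`- and `y`-derivatives. Contracting Hamel's equations with `y` and using Euler's relation
`∂_y F · y = F` gives `∂_x F = ∂_y (P F)`. The symmetry of `∂_x ∂_x F` then yields an
antisymmetric identity for `∂_x ∂_y P`; contracted with `y`, it expresses
`∂_x P = P ∂_y P − (F²/3) ∂_y K − K F ∂_y F`. The theorem is the symmetry of `∂_x ∂_x P` read
through this formula. -/

open Set Filter Topology Function
open scoped ContDiff

namespace ProjFlat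

section Calculus

variable {E : Type*} [NormedAddCommGroup E] [NormedSpace ℝ E] {f g : E → ℝ} {s : Set E}
  {p u v w : E}

def D (f : E → ℝ) (v : E) : E → ℝ := fun p => fderiv ℝ f p v

@[fun_prop]
theorem contDiffAt_D (hf : ContDiffAt ℝ ∞ f p) (v : E) : ContDiffAt ℝ ∞ (D f v) p :=
  (hf.fderiv_right (m := ∞) le_rfl).clm_apply contDiffAt_const

@[fun_prop]
theorem contDiffAt_D_apply {L : E → E} (hf : ContDiffAt ℝ ∞ f p) (hL : ContDiffAt ℝ ∞ L p) :
    ContDiffAt ℝ ∞ (fun q => D f (L q) q) p :=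
  (hf.fderiv_right (m := ∞) le_rfl).clm_apply hL

@[fun_prop]
theorem differentiableAt_of_contDiffAt (hf : ContDiffAt ℝ ∞ f p) : DifferentiableAt ℝ f p :=
  hf.differentiableAt (by simp)

theorem differentiableAt_fderiv (hf : ContDiffAt ℝ ∞ f p) :
    DifferentiableAt ℝ (fderiv ℝ f) p :=
  (hf.fderiv_right (m := ∞) le_rfl).differentiableAt (by simp)

theorem contDiffOn_D (hs : IsOpen s) (hf : ContDiffOn ℝ ∞ f s) (v : E) :
    ContDiffOn ℝ ∞ (D f v) s :=
  fun _ hq => (contDiffAt_D (hf.contDiffAt (hs.mem_nhds hq)) v).contDiffWithinAt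

theorem D_congr_of_eqOn (hs : IsOpen s) (h : EqOn f g s) (hp : p ∈ s) : D f v p = D g v p := by
  rw [D, D, (h.eventuallyEq_of_mem (hs.mem_nhds hp)).fderiv_eq]

theorem D_zero : D f 0 p = 0 := map_zero _

theorem D_add (hf : DifferentiableAt ℝ f p) (hg : DifferentiableAt ℝ g p) :
    D (fun q => f q + g q) v p = D f v p + D g v p := by
  simp [D, fderiv_fun_add hf hg]

theorem D_sub (hf : DifferentiableAt ℝ f p) (hg : DifferentiableAt ℝ g p) :
    D (fun q => f q - g q) v p = D f v p - D g v p := by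
  simp [D, fderiv_fun_sub hf hg]

theorem D_mul (hf : DifferentiableAt ℝ f p) (hg : DifferentiableAt ℝ g p) :
    D (fun q => f q * g q) v p = D f v p * g p + f p * D g v p := by
  simp [D, fderiv_fun_mul hf hg]
  ring

theorem D_const_mul (hf : DifferentiableAt ℝ f p) (c : ℝ) :
    D (fun q => c * f q) v p = c * D f v p := by
  simp [D, fderiv_const_mul hf]

theorem D_div_const (hf : DifferentiableAt ℝ f p) (c : ℝ) :
    D (fun q => f q / c) v p = D f v p / c := by
  simp_rw [div_eq_inv_mul, D_const_mul hf]

theorem D_pow (hf : DifferentiableAt ℝ f p) (m : ℕ) :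
    D (fun q => f q ^ m) v p = m * f p ^ (m - 1) * D f v p := by
  simp [D, fderiv_fun_pow m hf]

theorem D_D (hf : DifferentiableAt ℝ (fderiv ℝ f) p) :
    D (D f u) w p = fderiv ℝ (fderiv ℝ f) p w u := by
  change fderiv ℝ (fun q => fderiv ℝ f q u) p w = _
  simp [fderiv_clm_apply hf (differentiableAt_const u)]

theorem D_D_comm (hf : ContDiffAt ℝ ∞ f p) : D (D f u) w p = D (D f w) u p := by
  rw [D_D (differentiableAt_fderiv hf), D_D (differentiableAt_fderiv hf),
    (hf.isSymmSndFDerivAt (by simp; norm_cast)).eq]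

theorem D_D_apply (L : E →L[ℝ] E) (hf : DifferentiableAt ℝ (fderiv ℝ f) p) :
    D (fun q => D f (L q) q) w p = D (D f (L p)) w p + D f (L w) p := by
  rw [D_D hf]
  simp [D, fderiv_clm_apply hf L.differentiableAt]
  ring

end Calculus

section Homogeneous

variable {V : Type*} [NormedAddCommGroup V] [NormedSpace ℝ V] {f : V × V → ℝ}
  {s : Set (V × V)} {p : V × V}

theorem euler_of_homog (hf : DifferentiableAt ℝ f p)
    (hhom : ∀ c : ℝ, 0 < c → f (p.1, c • p.2) = c * f p) : D f (0, p.2) p = f p := by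
  have hline : (fun t : ℝ => f (p + t • (0, p.2))) =ᶠ[𝓝 0] fun t => (1 + t) * f p := by
    filter_upwards [lt_mem_nhds (show (-1 : ℝ) < 0 by norm_num)] with t ht
    rw [← hhom _ (by linarith)]
    congr 1
    ext <;> simp [add_smul]
  rw [D, ← hf.lineDeriv_eq_fderiv, lineDeriv, hline.deriv_eq]
  simp

theorem D_D_snd_horiz (hf : DifferentiableAt ℝ (fderiv ℝ f) p) (w : V × V) :
    D (fun q => D f (q.2, 0) q) w p = D (D f (p.2, 0)) w p + D f (w.2, 0) p :=
  D_D_apply ((ContinuousLinearMap.inl ℝ V V).comp (ContinuousLinearMap.snd ℝ V V)) hf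

theorem D_D_snd_vert (hf : DifferentiableAt ℝ (fderiv ℝ f) p) (w : V × V) :
    D (fun q => D f (0, q.2) q) w p = D (D f (0, p.2)) w p + D f (0, w.2) p :=
  D_D_apply ((ContinuousLinearMap.inr ℝ V V).comp (ContinuousLinearMap.snd ℝ V V)) hf

theorem D_D_vert_self (hs : IsOpen s) (hp : p ∈ s) (hf : ContDiffAt ℝ ∞ f p)
    (heuler : ∀ q ∈ s, D f (0, q.2) q = f q) (v : V) :
    D (D f (0, p.2)) (v, 0) p = D f (v, 0) p := by
  have h := D_congr_of_eqOn (v := (v, 0)) hs heuler hp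
  rwa [D_D_snd_vert (differentiableAt_fderiv hf), Prod.mk_zero_zero,
    D_zero, add_zero] at h

end Homogeneous

section ProjectivelyFlat

variable {V : Type*} [NormedAddCommGroup V] [NormedSpace ℝ V] {F : V × V → ℝ}
  {s : Set (V × V)} {p : V × V}

def projFac (F : V × V → ℝ) (q : V × V) : ℝ := D F (q.2, 0) q / (2 * F q)

def flagCurv (F : V × V → ℝ) (q : V × V) : ℝ :=
  (projFac F q ^ 2 - D (projFac F) (q.2, 0) q) / F q ^ 2

theorem contDiffAt_projFac (hF : ContDiffAt ℝ ∞ F p) (h0 : F p ≠ 0) :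
    ContDiffAt ℝ ∞ (projFac F) p := by
  unfold projFac
  fun_prop (disch := simpa using h0)

theorem contDiffAt_flagCurv (hF : ContDiffAt ℝ ∞ F p) (h0 : F p ≠ 0) :
    ContDiffAt ℝ ∞ (flagCurv F) p := by
  have := contDiffAt_projFac hF h0
  unfold flagCurv
  fun_prop (disch := simpa using h0)

structure IsProjFlatOn (F : V × V → ℝ) (s : Set (V × V)) : Prop where
  isOpen : IsOpen s
  contDiffOn : ContDiffOn ℝ ∞ F s
  ne_zero : ∀ p ∈ s, F p ≠ 0
  homog : ∀ p ∈ s, ∀ c : ℝ, 0 < c → F (p.1, c • p.2) = c * F p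
  hamel : ∀ p ∈ s, ∀ u v : V, D (D F (0, u)) (v, 0) p = D (D F (0, v)) (u, 0) p

namespace IsProjFlatOn

theorem contDiffAt (h : IsProjFlatOn F s) (hp : p ∈ s) : ContDiffAt ℝ ∞ F p :=
  h.contDiffOn.contDiffAt (h.isOpen.mem_nhds hp)

theorem contDiffOn_projFac (h : IsProjFlatOn F s) : ContDiffOn ℝ ∞ (projFac F) s :=
  fun q hq => (contDiffAt_projFac (h.contDiffAt hq) (h.ne_zero q hq)).contDiffWithinAt

theorem contDiffOn_flagCurv (h : IsProjFlatOn F s) : ContDiffOn ℝ ∞ (flagCurv F) s :=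
  fun q hq => (contDiffAt_flagCurv (h.contDiffAt hq) (h.ne_zero q hq)).contDiffWithinAt

theorem euler (h : IsProjFlatOn F s) (hp : p ∈ s) : D F (0, p.2) p = F p :=
  euler_of_homog (differentiableAt_of_contDiffAt (h.contDiffAt hp)) (h.homog p hp)

theorem D_horiz_self (h : IsProjFlatOn F s) (hp : p ∈ s) :
    D F (p.2, 0) p = 2 * (projFac F p * F p) := by
  have := h.ne_zero p hp
  unfold projFac
  field_simp

theorem D_horiz_eq (h : IsProjFlatOn F s) (hp : p ∈ s) (v : V) :
    D F (v, 0) p = D (projFac F) (0, v) p * F p + projFac F p * D F (0, v) p := by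
  have hF := h.contDiffAt hp
  have hP := contDiffAt_projFac hF (h.ne_zero p hp)
  have hyx : D (D F (p.2, 0)) (0, v) p = D F (v, 0) p := by
    rw [D_D_comm hF, h.hamel p hp v p.2,
      D_D_vert_self h.isOpen hp hF (fun q hq => h.euler hq)]
  have hN := D_congr_of_eqOn (v := ((0 : V), v)) h.isOpen (fun q hq => h.D_horiz_self hq) hp
  simp (disch := fun_prop) only [D_D_snd_horiz (differentiableAt_fderiv hF), hyx, D_const_mul,
    D_mul] at hN
  linarith

theorem euler_projFac (h : IsProjFlatOn F s) (hp : p ∈ s) :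
    D (projFac F) (0, p.2) p = projFac F p := by
  have h1 := h.D_horiz_eq hp p.2
  rw [h.D_horiz_self hp, h.euler hp] at h1
  exact mul_right_cancel₀ (h.ne_zero p hp) (by linarith)

theorem antisymm_D_D_projFac (h : IsProjFlatOn F s) (hp : p ∈ s) (u v : V) :
    F p * (D (D (projFac F) (0, u)) (v, 0) p - D (D (projFac F) (0, v)) (u, 0) p)
      + projFac F p * (D (projFac F) (0, u) p * D F (0, v) p
        - D (projFac F) (0, v) p * D F (0, u) p)
      + D (projFac F) (v, 0) p * D F (0, u) p - D (projFac F) (u, 0) p * D F (0, v) p = 0 := by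
  have hF := h.contDiffAt hp
  have hP := contDiffAt_projFac hF (h.ne_zero p hp)
  have hxx : ∀ a b : V, D (D F (a, 0)) (b, 0) p
      = D (D (projFac F) (0, a)) (b, 0) p * F p + D (projFac F) (0, a) p * D F (b, 0) p
        + (D (projFac F) (b, 0) p * D F (0, a) p + projFac F p * D (D F (0, a)) (b, 0) p) := by
    intro a b
    rw [D_congr_of_eqOn h.isOpen (fun q hq => h.D_horiz_eq hq a) hp]
    simp (disch := fun_prop) only [D_add, D_mul]
  have hsymm := D_D_comm (u := (u, 0)) (w := (v, 0)) hF
  rw [hxx u v, hxx v u, h.hamel p hp u v, h.D_horiz_eq hp u, h.D_horiz_eq hp v] at hsymm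
  linear_combination hsymm

theorem D_horiz_projFac (h : IsProjFlatOn F s) (hp : p ∈ s) (v : V) :
    D (projFac F) (v, 0) p = projFac F p * D (projFac F) (0, v) p
      - F p ^ 2 / 3 * D (flagCurv F) (0, v) p - flagCurv F p * F p * D F (0, v) p := by
  have h0 := h.ne_zero p hp
  have hF := h.contDiffAt hp
  have hP := contDiffAt_projFac hF h0
  have hK := contDiffAt_flagCurv hF h0
  have hQ : ∀ q ∈ s, D (projFac F) (q.2, 0) q = projFac F q ^ 2 - flagCurv F q * F q ^ 2 := by
    intro q hq
    have := h.ne_zero q hq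
    unfold flagCurv
    field_simp
    ring
  have hQy := D_congr_of_eqOn (v := ((0 : V), v)) h.isOpen hQ hp
  simp (disch := fun_prop) only [D_D_snd_horiz (differentiableAt_fderiv hP), D_sub, D_mul,
    D_pow] at hQy
  have hstar := h.antisymm_D_D_projFac hp v p.2
  rw [D_D_comm hP (u := (0, v)) (w := (p.2, 0)),
    D_D_vert_self h.isOpen hp hP (fun q hq => h.euler_projFac hq), h.euler hp,
    h.euler_projFac hp, hQ p hp] at hstar
  apply mul_left_cancel₀ h0
  linear_combination (-1 / 3 : ℝ) * hstar + F p / 3 * hQy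

theorem flagCurv_identity (h : IsProjFlatOn F s) (hp : p ∈ s) (u v : V) :
    F p / 3 * (D (flagCurv F) (0, u) p * D (projFac F) (0, v) p
        - D (flagCurv F) (0, v) p * D (projFac F) (0, u) p)
      + projFac F p * (D (flagCurv F) (0, u) p * D F (0, v) p
        - D (flagCurv F) (0, v) p * D F (0, u) p)
      + D (flagCurv F) (v, 0) p * D F (0, u) p - D (flagCurv F) (u, 0) p * D F (0, v) p
      + F p / 3 * (D (D (flagCurv F) (0, u)) (v, 0) p - D (D (flagCurv F) (0, v)) (u, 0) p)
      = 0 := by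
  have h0 := h.ne_zero p hp
  have hF := h.contDiffAt hp
  have hP := contDiffAt_projFac hF h0
  have hK := contDiffAt_flagCurv hF h0
  have hxx : ∀ a b : V, D (D (projFac F) (a, 0)) (b, 0) p
      = D (projFac F) (b, 0) p * D (projFac F) (0, a) p
        + projFac F p * D (D (projFac F) (0, a)) (b, 0) p
        - (2 * F p * D F (b, 0) p / 3 * D (flagCurv F) (0, a) p
          + F p ^ 2 / 3 * D (D (flagCurv F) (0, a)) (b, 0) p)
        - ((D (flagCurv F) (b, 0) p * F p + flagCurv F p * D F (b, 0) p) * D F (0, a) p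
          + flagCurv F p * F p * D (D F (0, a)) (b, 0) p) := by
    intro a b
    rw [D_congr_of_eqOn h.isOpen (fun q hq => h.D_horiz_projFac hq a) hp]
    simp (disch := fun_prop) only [D_sub, D_mul, D_div_const, D_pow]
    ring
  have hsymm := D_D_comm (u := (u, 0)) (w := (v, 0)) hP
  rw [hxx u v, hxx v u, h.hamel p hp u v, h.D_horiz_eq hp u, h.D_horiz_eq hp v,
    h.D_horiz_projFac hp u, h.D_horiz_projFac hp v] at hsymm
  have hstar := h.antisymm_D_D_projFac hp u v
  rw [h.D_horiz_projFac hp u, h.D_horiz_projFac hp v] at hstar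
  refine (mul_eq_zero.mp ?_).resolve_left (pow_ne_zero 2 h0)
  linear_combination (-F p) * hsymm + projFac F p * hstar

end IsProjFlatOn

end ProjectivelyFlat

section Coordinates

variable {n : ℕ} {s : Set ((Fin n → ℝ) × (Fin n → ℝ))}
  {T : (Fin n → ℝ) → (Fin n → ℝ) → ℝ} {f : (Fin n → ℝ) × (Fin n → ℝ) → ℝ}

theorem sum_mul_D_single (y : Fin n → ℝ) (p : (Fin n → ℝ) × (Fin n → ℝ)) :
    ∑ m, y m * D f (Pi.single m 1, 0) p = D f (y, 0) p := by
  conv_rhs => rw [D, pi_eq_sum_univ' y, ← ContinuousLinearMap.inl_apply (R := ℝ)]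
  simp only [map_sum, map_smul, smul_eq_mul, ContinuousLinearMap.inl_apply, D]

theorem D_D_eq_sum_single {p : (Fin n → ℝ) × (Fin n → ℝ)}
    (hf : DifferentiableAt ℝ (fderiv ℝ f) p) (u v : Fin n → ℝ) :
    D (D f (0, u)) (v, 0) p
      = ∑ k, ∑ l, u k * (v l * D (D f (0, Pi.single k 1)) (Pi.single l 1, 0) p) := by
  simp only [D_D hf]
  conv_lhs => rw [pi_eq_sum_univ' u, pi_eq_sum_univ' v,
    ← ContinuousLinearMap.inl_apply (R := ℝ), ← ContinuousLinearMap.inr_apply (R := ℝ)]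
  simp only [map_sum, map_smul, smul_eq_mul, ContinuousLinearMap.inl_apply,
    ContinuousLinearMap.inr_apply, sum_apply, smul_apply, Finset.mul_sum]

theorem hamel_of_single {p : (Fin n → ℝ) × (Fin n → ℝ)} (hf : DifferentiableAt ℝ (fderiv ℝ f) p)
    (h : ∀ k l : Fin n, D (D f (0, Pi.single k 1)) (Pi.single l 1, 0) p
      = D (D f (0, Pi.single l 1)) (Pi.single k 1, 0) p) (u v : Fin n → ℝ) :
    D (D f (0, u)) (v, 0) p = D (D f (0, v)) (u, 0) p := by
  rw [D_D_eq_sum_single hf, D_D_eq_sum_single hf, Finset.sum_comm]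
  refine Finset.sum_congr rfl fun l _ => Finset.sum_congr rfl fun k _ => ?_
  rw [h]
  ring

theorem eqOn_dy (hs : IsOpen s) (hT : EqOn (uncurry T) f s) (hf : DifferentiableOn ℝ f s)
    (k : Fin n) : EqOn (uncurry (dy T k)) (D f (0, Pi.single k 1)) s := by
  intro p hp
  have hev : T p.1 =ᶠ[𝓝 p.2] fun y => f (p.1, y) :=
    (hT.eventuallyEq_of_mem (hs.mem_nhds hp)).comp_tendsto
      ((continuous_const.prodMk continuous_id).tendsto p.2)
  have hchain : fderiv ℝ (fun y => f (p.1, y)) p.2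
      = (fderiv ℝ f p).comp (ContinuousLinearMap.inr ℝ _ _) :=
    ((hf.differentiableAt (hs.mem_nhds hp)).hasFDerivAt.comp p.2
      (hasFDerivAt_prodMk_right (𝕜 := ℝ) p.1 p.2)).fderiv
  simp only [uncurry, dy, hev.fderiv_eq, hchain]
  rfl

theorem eqOn_dx (hs : IsOpen s) (hT : EqOn (uncurry T) f s) (hf : DifferentiableOn ℝ f s)
    (k : Fin n) : EqOn (uncurry (dx T k)) (D f (Pi.single k 1, 0)) s := by
  intro p hp
  have hev : (fun x => T x p.2) =ᶠ[𝓝 p.1] fun x => f (x, p.2) :=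
    (hT.eventuallyEq_of_mem (hs.mem_nhds hp)).comp_tendsto
      ((continuous_id.prodMk continuous_const).tendsto p.1)
  have hchain : fderiv ℝ (fun x => f (x, p.2)) p.1
      = (fderiv ℝ f p).comp (ContinuousLinearMap.inl ℝ _ _) :=
    ((hf.differentiableAt (hs.mem_nhds hp)).hasFDerivAt.comp p.1
      (hasFDerivAt_prodMk_left (𝕜 := ℝ) p.1 p.2)).fderiv
  simp only [uncurry, dx, hev.fderiv_eq, hchain]
  rfl

theorem isProjFlatOn_of_isFinslerMetric {U : Set (Fin n → ℝ)} {F : (Fin n → ℝ) → (Fin n → ℝ) → ℝ}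
    (hF : IsFinslerMetric U F) (hPF : IsProjFlat U F) :
    IsProjFlatOn (uncurry F) (U ×ˢ {y | y ≠ 0}) := by
  have hs : IsOpen (U ×ˢ {y : Fin n → ℝ | y ≠ 0}) := hF.isOpen.prod isOpen_ne
  have hsmooth : ContDiffOn ℝ ∞ (uncurry F) (U ×ˢ {y | y ≠ 0}) := hF.smoothOn
  refine ⟨hs, hsmooth, fun p hp => (hF.pos p.1 hp.1 p.2 hp.2).ne',
    fun p hp c hc => hF.homog p.1 hp.1 p.2 c hc, fun p hp => hamel_of_single
      (differentiableAt_fderiv (hsmooth.contDiffAt (hs.mem_nhds hp))) fun k l => ?_⟩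
  have hFy := eqOn_dy hs (eqOn_refl _ _) (hsmooth.differentiableOn (by simp))
  have hFyx := fun k => eqOn_dx hs (hFy k) ((contDiffOn_D hs hsmooth _).differentiableOn (by simp))
  rw [← hFyx k l hp, ← hFyx l k hp]
  exact hPF p.1 hp.1 p.2 hp.2 k l

namespace IsProjFlatOn

variable {F : (Fin n → ℝ) → (Fin n → ℝ) → ℝ}

theorem eqOn_projFactor (h : IsProjFlatOn (uncurry F) s) :
    EqOn (uncurry (projFactor F)) (projFac (uncurry F)) s := by
  intro p hp
  have hFx := eqOn_dx h.isOpen (eqOn_refl _ _) (h.contDiffOn.differentiableOn (by simp))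
  change (∑ m, p.2 m * dx F m p.1 p.2) / _ = D (uncurry F) (p.2, 0) p / _
  rw [← sum_mul_D_single]
  exact congrArg (· / _) (Finset.sum_congr rfl fun m _ => congrArg (p.2 m * ·) (hFx m hp))

theorem eqOn_flagCurvPF (h : IsProjFlatOn (uncurry F) s) :
    EqOn (uncurry (flagCurvPF F)) (flagCurv (uncurry F)) s := by
  intro p hp
  have hPx := eqOn_dx h.isOpen h.eqOn_projFactor (h.contDiffOn_projFac.differentiableOn (by simp))
  change (projFactor F p.1 p.2 ^ 2 - ∑ m, p.2 m * dx (projFactor F) m p.1 p.2) / _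
    = (projFac (uncurry F) p ^ 2 - D (projFac (uncurry F)) (p.2, 0) p) / _
  rw [← sum_mul_D_single, ← h.eqOn_projFactor hp]
  exact congrArg (fun t => (uncurry (projFactor F) p ^ 2 - t) / _)
    (Finset.sum_congr rfl fun m _ => congrArg (p.2 m * ·) (hPx m hp))

end IsProjFlatOn

end Coordinates

end ProjFlat

open ProjFlat

/-- Lemma 5.1. For a projectively flat Finsler metric with
projective factor `P` and flag curvature `K`:
`(F/3)(K_{·l}P_{·k} − K_{·k}P_{·l}) + P(K_{·l}F_{·k} − K_{·k}F_{·l})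
 + K_{x^k}F_{·l} − K_{x^l}F_{·k} + (F/3)(K_{·l x^k} − K_{·k x^l}) = 0`. -/
theorem projflat_flag_curv_identity
    {n : ℕ} {U : Set (Fin n → ℝ)}
    {F : (Fin n → ℝ) → (Fin n → ℝ) → ℝ} (hF : IsFinslerMetric U F)
    (hPF : IsProjFlat U F) :
    ∀ x ∈ U, ∀ y : Fin n → ℝ, y ≠ 0 → ∀ k l : Fin n,
      F x y / 3 * (dy (flagCurvPF F) l x y * dy (projFactor F) k x y
          - dy (flagCurvPF F) k x y * dy (projFactor F) l x y)
        + projFactor F x y * (dy (flagCurvPF F) l x y * dy F k x y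
          - dy (flagCurvPF F) k x y * dy F l x y)
        + dx (flagCurvPF F) k x y * dy F l x y
        - dx (flagCurvPF F) l x y * dy F k x y
        + F x y / 3 * (dx (dy (flagCurvPF F) l) k x y
          - dx (dy (flagCurvPF F) k) l x y) = 0 := by
  intro x hx y hy k l
  have h := isProjFlatOn_of_isFinslerMetric hF hPF
  have hp : (x, y) ∈ U ×ˢ {v : Fin n → ℝ | v ≠ 0} := ⟨hx, hy⟩
  have hK := h.contDiffOn_flagCurv
  have hFy := eqOn_dy h.isOpen (eqOn_refl _ _) (h.contDiffOn.differentiableOn (by simp))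
  have hPy := eqOn_dy h.isOpen h.eqOn_projFactor (h.contDiffOn_projFac.differentiableOn (by simp))
  have hKy := eqOn_dy h.isOpen h.eqOn_flagCurvPF (hK.differentiableOn (by simp))
  have hKx := eqOn_dx h.isOpen h.eqOn_flagCurvPF (hK.differentiableOn (by simp))
  have hKyx := fun j => eqOn_dx h.isOpen (hKy j)
    ((contDiffOn_D h.isOpen hK _).differentiableOn (by simp))
  have key := h.flagCurv_identity hp (Pi.single l 1) (Pi.single k 1)
  rw [← h.eqOn_projFactor hp, ← hFy k hp, ← hFy l hp, ← hPy k hp, ← hPy l hp, ← hKy k hp,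
    ← hKy l hp, ← hKx k hp, ← hKx l hp, ← hKyx l k hp, ← hKyx k l hp] at key
  exact key
end
end
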